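/- The Euler allocation of IMCC with stress-scaling adjustment is a full allocation (Proposition 3.13, Euler case): Let N be a positive integer and for each i ∈ Fin 6 and j ∈ Fin 5 let g^{FC}_{ij}, g^{RS}_{ij}, g^{RC}_{ij} : (Fin N → ℝ) → ℝ be positively homogeneous of degree 1 and Fréchet differentiable at the all-ones vector 𝟙. For • ∈ {FC, RS, RC} set ES^•(i) = sqrt(∑_{j ∈ Fin 5} g^•_{ij}(𝟙)²) and A^•_n(i,j) = (g^•_{ij}(𝟙)/ES^•(i)) · (fderiv ℝ g^•_{ij} 𝟙)(e_n), and assume ES^{FC}(i) ≠ 0, ES^{RS}(i) ≠ 0 and ES^{RC}(i) ≠ 0 for every i. Define IMCC^{E,S}_n(i,j) = 0.5 · [ (ES^{RS}(i)/ES^{RC}(i)) · A^{FC}_n(i,j) + (ES^{FC}(i)/ES^{RC}(i)) · A^{RS}_n(i,j) − (ES^{RS}(i)·ES^{FC}(i)/ES^{RC}(i)²) · A^{RC}_n(i,j) ]. Then ∑_{n ∈ Fin N} ∑_{i ∈ Fin 6} ∑_{j ∈ Fin 5} IMCC^{E,S}_n(i,j) = 0.5 · ∑_{i ∈ Fin 6}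 (ES^{RS}(i)/ES^{RC}(i)) · ES^{FC}(i). -/

import Mathlib

/-! Euler's theorem for a positively homogeneous function differentiable at `𝟙` says that its
partial derivatives there sum to its value, so in every bucket the `n`-sum of `A^•_n(i,j)` is
`g^•_{ij}(𝟙)² / ES^•(i)`, and summing over `j` gives `ES^•(i)`. The allocated total of row `i` is
then `½ (ES^{RS}/ES^{RC} · ES^{FC} + ES^{FC}/ES^{RC} · ES^{RS} − ES^{RS} ES^{FC}/ES^{RC}² · ES^{RC})`,
whose last two terms cancel. -/

theorem fderiv_apply_self_of_pos_homogeneous {E F : Type*} [NormedAddCommGroup E]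
    [NormedSpace ℝ E] [NormedAddCommGroup F] [NormedSpace ℝ F] {g : E → F} {x : E}
    (hhom : ∀ a : ℝ, 0 < a → ∀ v : E, g (a • v) = a • g v) (hd : DifferentiableAt ℝ g x) :
    fderiv ℝ g x x = g x := by
  have hray : HasDerivAt (fun t : ℝ => g (t • x)) (fderiv ℝ g x x) 1 := by
    have hline : HasDerivAt (fun t : ℝ => t • x) x 1 := by
      simpa using (hasDerivAt_id (1 : ℝ)).smul_const x
    have hg : HasFDerivAt g (fderiv ℝ g x) ((1 : ℝ) • x) := by simpa using hd.hasFDerivAt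
    exact hg.comp_hasDerivAt 1 hline
  have hlin : HasDerivAt (fun t : ℝ => t • g x) (g x) 1 := by
    simpa using (hasDerivAt_id (1 : ℝ)).smul_const (g x)
  have heq : (fun t : ℝ => g (t • x)) =ᶠ[nhds 1] fun t => t • g x := by
    filter_upwards [eventually_gt_nhds one_pos] with t ht using hhom t ht x
  exact hray.unique (hlin.congr_of_eventuallyEq heq)

theorem sum_fderiv_single_eq_of_pos_homogeneous {ι : Type*} [Fintype ι] [DecidableEq ι]
    {g : (ι → ℝ) → ℝ} (hhom : ∀ a : ℝ, 0 < a → ∀ v : ι → ℝ, g (a • v) = a * g v)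
    (hd : DifferentiableAt ℝ g 1) :
    ∑ n, fderiv ℝ g 1 (Pi.single n 1) = g 1 := by
  rw [← map_sum]
  exact (congrArg _ (Finset.univ_sum_single 1)).trans
    (fderiv_apply_self_of_pos_homogeneous hhom hd)

theorem sum_mul_self_div_sqrt_sum_sq {J : Type*} [Fintype J] (c : J → ℝ) :
    ∑ j, c j / √(∑ j, c j ^ 2) * c j = √(∑ j, c j ^ 2) := by
  conv_rhs => rw [← Real.div_sqrt, Finset.sum_div]
  exact Finset.sum_congr rfl fun j _ => by ring

theorem sum_sum_euler_allocation_eq_sqrt {ι J : Type*} [Fintype ι] [DecidableEq ι] [Fintype J]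
    {g : J → (ι → ℝ) → ℝ} (hhom : ∀ j, ∀ a : ℝ, 0 < a → ∀ v : ι → ℝ, g j (a • v) = a * g j v)
    (hd : ∀ j, DifferentiableAt ℝ (g j) 1) {ES : ℝ} (hES : ES = √(∑ j, g j 1 ^ 2)) :
    ∑ n, ∑ j, g j 1 / ES * fderiv ℝ (g j) 1 (Pi.single n 1) = ES := by
  rw [Finset.sum_comm]
  simp_rw [← Finset.mul_sum, sum_fderiv_single_eq_of_pos_homogeneous (hhom _) (hd _), hES]
  exact sum_mul_self_div_sqrt_sum_sq _

theorem div_sq_mul_self {K : Type*} [Field K] (a b : K) : a / b ^ 2 * b = a / b := by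
  rcases eq_or_ne b 0 with rfl | hb
  · simp
  · field_simp

theorem euler_allocation_scaling_full_general {N : ℕ}
    (gFC gRS gRC : Fin 6 → Fin 5 → (Fin N → ℝ) → ℝ)
    (hhomFC : ∀ i j, ∀ (a : ℝ), 0 ≤ a → ∀ v : Fin N → ℝ, gFC i j (a • v) = a * gFC i j v)
    (hhomRS : ∀ i j, ∀ (a : ℝ), 0 ≤ a → ∀ v : Fin N → ℝ, gRS i j (a • v) = a * gRS i j v)
    (hhomRC : ∀ i j, ∀ (a : ℝ), 0 ≤ a → ∀ v : Fin N → ℝ, gRC i j (a • v) = a * gRC i j v)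
    (hdiffFC : ∀ i j, DifferentiableAt ℝ (gFC i j) (1 : Fin N → ℝ))
    (hdiffRS : ∀ i j, DifferentiableAt ℝ (gRS i j) (1 : Fin N → ℝ))
    (hdiffRC : ∀ i j, DifferentiableAt ℝ (gRC i j) (1 : Fin N → ℝ))
    (ESFC ESRS ESRC : Fin 6 → ℝ)
    (hESFC : ∀ i, ESFC i = Real.sqrt (∑ j, (gFC i j (1 : Fin N → ℝ)) ^ 2))
    (hESRS : ∀ i, ESRS i = Real.sqrt (∑ j, (gRS i j (1 : Fin N → ℝ)) ^ 2))
    (hESRC : ∀ i, ESRC i = Real.sqrt (∑ j, (gRC i j (1 : Fin N → ℝ)) ^ 2)) :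
    ∑ n : Fin N, ∑ i : Fin 6, ∑ j : Fin 5,
        0.5 * ((ESRS i / ESRC i)
            * ((gFC i j (1 : Fin N → ℝ) / ESFC i)
              * (fderiv ℝ (gFC i j) (1 : Fin N → ℝ)) (Pi.single n 1))
          + (ESFC i / ESRC i)
            * ((gRS i j (1 : Fin N → ℝ) / ESRS i)
              * (fderiv ℝ (gRS i j) (1 : Fin N → ℝ)) (Pi.single n 1))
          - (ESRS i * ESFC i / (ESRC i) ^ 2)
            * ((gRC i j (1 : Fin N → ℝ) / ESRC i)
              * (fderiv ℝ (gRC i j) (1 : Fin N → ℝ)) (Pi.single n 1)))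
      = 0.5 * ∑ i : Fin 6, (ESRS i / ESRC i) * ESFC i := by
  rw [Finset.sum_comm, Finset.mul_sum]
  refine Finset.sum_congr rfl fun i _ => ?_
  have rowFC := sum_sum_euler_allocation_eq_sqrt (fun j a ha => hhomFC i j a ha.le)
    (hdiffFC i) (hESFC i)
  have rowRS := sum_sum_euler_allocation_eq_sqrt (fun j a ha => hhomRS i j a ha.le)
    (hdiffRS i) (hESRS i)
  have rowRC := sum_sum_euler_allocation_eq_sqrt (fun j a ha => hhomRC i j a ha.le)
    (hdiffRC i) (hESRC i)
  simp only [← Finset.mul_sum, Finset.sum_add_distrib, Finset.sum_sub_distrib]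
  rw [rowFC, rowRS, rowRC, div_sq_mul_self]
  ring

/-- The Euler allocation of IMCC with stress-scaling adjustment is a full
allocation (Proposition 3.13, Euler case). -/
theorem euler_allocation_scaling_full {N : ℕ} (hN : 0 < N)
    (gFC gRS gRC : Fin 6 → Fin 5 → (Fin N → ℝ) → ℝ)
    (hhomFC : ∀ i j, ∀ (a : ℝ), 0 ≤ a → ∀ v : Fin N → ℝ, gFC i j (a • v) = a * gFC i j v)
    (hhomRS : ∀ i j, ∀ (a : ℝ), 0 ≤ a → ∀ v : Fin N → ℝ, gRS i j (a • v) = a * gRS i j v)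
    (hhomRC : ∀ i j, ∀ (a : ℝ), 0 ≤ a → ∀ v : Fin N → ℝ, gRC i j (a • v) = a * gRC i j v)
    (hdiffFC : ∀ i j, DifferentiableAt ℝ (gFC i j) (1 : Fin N → ℝ))
    (hdiffRS : ∀ i j, DifferentiableAt ℝ (gRS i j) (1 : Fin N → ℝ))
    (hdiffRC : ∀ i j, DifferentiableAt ℝ (gRC i j) (1 : Fin N → ℝ))
    (ESFC ESRS ESRC : Fin 6 → ℝ)
    (hESFC : ∀ i, ESFC i = Real.sqrt (∑ j, (gFC i j (1 : Fin N → ℝ)) ^ 2))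
    (hESRS : ∀ i, ESRS i = Real.sqrt (∑ j, (gRS i j (1 : Fin N → ℝ)) ^ 2))
    (hESRC : ∀ i, ESRC i = Real.sqrt (∑ j, (gRC i j (1 : Fin N → ℝ)) ^ 2))
    (hneFC : ∀ i, ESFC i ≠ 0) (hneRS : ∀ i, ESRS i ≠ 0) (hneRC : ∀ i, ESRC i ≠ 0) :
    ∑ n : Fin N, ∑ i : Fin 6, ∑ j : Fin 5,
        0.5 * ((ESRS i / ESRC i)
            * ((gFC i j (1 : Fin N → ℝ) / ESFC i)
              * (fderiv ℝ (gFC i j) (1 : Fin N → ℝ)) (Pi.single n 1))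
          + (ESFC i / ESRC i)
            * ((gRS i j (1 : Fin N → ℝ) / ESRS i)
              * (fderiv ℝ (gRS i j) (1 : Fin N → ℝ)) (Pi.single n 1))
          - (ESRS i * ESFC i / (ESRC i) ^ 2)
            * ((gRC i j (1 : Fin N → ℝ) / ESRC i)
              * (fderiv ℝ (gRC i j) (1 : Fin N → ℝ)) (Pi.single n 1)))
      = 0.5 * ∑ i : Fin 6, (ESRS i / ESRC i) * ESFC i :=
  euler_allocation_scaling_full_general gFC gRS gRC hhomFC hhomRS hhomRC hdiffFC hdiffRS hdiffRC
    ESFC ESRS ESRC hESFC hESRS hESRC
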